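/- Let p ∈ (0,1) and ε > 0 be fixed, and let s = s(d) be a sequence of positive integers with s(d) ≫ d/log d (i.e. s(d)·(log d)/d → ∞). Then for every sequence of vertex sets V(d) with x(d) = (1/d)·log|V(d)|, the probability that G_{V(d),d,p} contains a clique on s(d) vertices tends to 0 as d → ∞ if x(d) ≤ log(2/(1+p)) + (log s)/d − ε(log d)/d, and tends to 1 as d → ∞ if x(d) ≥ log(2/(1+p)) + (log s)/d + ε/d. Further, if s(d)/d → ∞ as d → ∞, then the probability already tends to 0 whenever x(d) ≤ log(2/(1+p)) + (log s)/d − ε/d. -/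

import Mathlib

open MeasureTheory Filter

/-- A subcube of the hypercube `{0,1}^d`, encoded coordinatewise: `none` is a
free (`⋆`) coordinate, `some b` a coordinate fixed to `b`. -/
abbrev Subcube (d : ℕ) := Fin d → Option Bool

/-- A point `x ∈ {0,1}^d` lies in the subcube `c`. -/
def memSubcube {d : ℕ} (x : Fin d → Bool) (c : Subcube d) : Prop :=
  ∀ i : Fin d, ∀ b : Bool, c i = some b → x i = b

/-- Two subcubes have non-empty intersection. -/
def subcubesIntersect {d : ℕ} (c₁ c₂ : Subcube d) : Prop :=
  ∃ x : Fin d → Bool, memSubcube x c₁ ∧ memSubcube x c₂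

/-- The dimension of a subcube: the number of free (`⋆`) coordinates. -/
def subcubeDim {d : ℕ} (c : Subcube d) : ℕ :=
  (Finset.univ.filter fun i : Fin d => c i = none).card

instance : MeasurableSpace (Option Bool) := ⊤

/-- The distribution of a single coordinate of a binomial random subcube with
parameter `p`: `⋆` with probability `p`, each of `0`, `1` with probability `(1-p)/2`. -/
noncomputable def coordMeasure (p : ℝ) : Measure (Option Bool) :=
  ENNReal.ofReal p • Measure.dirac (none : Option Bool)
    + ENNReal.ofReal ((1 - p) / 2) • Measure.dirac (some false)
    + ENNReal.ofReal ((1 - p) / 2) • Measure.dirac (some true)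

/-- The distribution of a binomial random subcube of `Q_d` with parameter `p`. -/
noncomputable def cubeMeasure (d : ℕ) (p : ℝ) : Measure (Subcube d) :=
  Measure.pi fun _ : Fin d => coordMeasure p

/-- The binomial random subcube intersection model `G_{V,d,p}`: an independent
binomial random subcube with parameter `p` for each vertex of `V`. -/
noncomputable def binomialModel (V : Type*) [Fintype V] (d : ℕ) (p : ℝ) :
    Measure (V → Subcube d) :=
  Measure.pi fun _ : V => cubeMeasure d p

/-- The uniform distribution on the `k`-dimensional subcubes of `Q_d`. -/
noncomputable def uniformCubeMeasure (d k : ℕ) : Measure (Subcube d) :=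
  (Measure.count {c : Subcube d | subcubeDim c = k})⁻¹ •
    Measure.count.restrict {c : Subcube d | subcubeDim c = k}

/-- The uniform random subcube intersection model `G_{V,d,k}`. -/
noncomputable def uniformModel (V : Type*) [Fintype V] (d k : ℕ) :
    Measure (V → Subcube d) :=
  Measure.pi fun _ : V => uniformCubeMeasure d k

/-- The intersection graph of the family of subcubes `f` contains a clique on
`s` vertices. -/
def hasClique {V : Type*} {d : ℕ} (f : V → Subcube d) (s : ℕ) : Prop :=
  ∃ T : Finset V, T.card = s ∧ ∀ u ∈ T, ∀ v ∈ T, subcubesIntersect (f u) (f v)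

/-- The feature subcubes `f v`, `v ∈ V`, cover the ambient hypercube `Q_d`. -/
def coversCube {V : Type*} {d : ℕ} (f : V → Subcube d) : Prop :=
  ∀ x : Fin d → Bool, ∃ v : V, memSubcube x (f v)

/-- `t_{K_s}(p) = -(1/s) log (2((1+p)/2)^s - p^s)`. -/
noncomputable def cliqueThreshold (p : ℝ) (s : ℕ) : ℝ :=
  -(1 / s) * Real.log (2 * ((1 + p) / 2) ^ s - p ^ s)

section AuxProofs

instance : MeasurableSingletonClass (Option Bool) := ⟨fun _ => trivial⟩

lemma aux_measure_eq_sum {α : Type*} [Fintype α] [MeasurableSpace α]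
    [MeasurableSingletonClass α] (μ : MeasureTheory.Measure α) (S : Set α)
    [DecidablePred (· ∈ S)] :
    μ S = ∑ a ∈ Finset.univ.filter (· ∈ S), μ {a} := by
  have h : S = ⋃ a ∈ (Finset.univ.filter (· ∈ S) : Finset α), ({a} : Set α) := by
    ext a; simp
  rw [show μ S = μ (⋃ a ∈ (Finset.univ.filter (· ∈ S) : Finset α), ({a} : Set α)) from by
      rw [← h],
    measure_biUnion_finset]
  · intro a _ b _ hab
    simp [Set.disjoint_singleton, hab]
  · intro a _; exact measurableSet_singleton a

lemma coord_none (p : ℝ) : coordMeasure p {none} = ENNReal.ofReal p := by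
  have hm : MeasurableSet ({none} : Set (Option Bool)) := trivial
  simp [coordMeasure, MeasureTheory.Measure.dirac_apply' _ hm, Set.indicator]

lemma coord_some (p : ℝ) (b : Bool) :
    coordMeasure p {some b} = ENNReal.ofReal ((1-p)/2) := by
  have hm : MeasurableSet ({some b} : Set (Option Bool)) := trivial
  cases b <;> simp [coordMeasure, MeasureTheory.Measure.dirac_apply' _ hm, Set.indicator]

lemma coord_memSet (p : ℝ) (hp0 : 0 ≤ p) (hp1 : p ≤ 1) (y : Bool) :
    coordMeasure p {o : Option Bool | ∀ b, o = some b → y = b}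
      = ENNReal.ofReal ((1+p)/2) := by
  have hset : {o : Option Bool | ∀ b, o = some b → y = b} = {none} ∪ {some y} := by
    ext o; cases o with
    | none => simp
    | some b => cases b <;> cases y <;> simp
  rw [hset, measure_union (by simp) (measurableSet_singleton _), coord_none, coord_some,
    ← ENNReal.ofReal_add hp0 (by linarith)]
  congr 1; ring

lemma coord_univ (p : ℝ) (hp0 : 0 ≤ p) (hp1 : p ≤ 1) :
    coordMeasure p Set.univ = 1 := by
  have h : (Set.univ : Set (Option Bool)) = {none} ∪ ({some false} ∪ {some true}) := by
    ext o; rcases o with _ | (_|_) <;> simp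
  rw [h, measure_union (by simp) (by trivial), measure_union (by simp) (by trivial),
    coord_none, coord_some, coord_some, ← ENNReal.ofReal_add (by linarith) (by linarith),
    ← ENNReal.ofReal_add hp0 (by linarith), show p + ((1-p)/2 + (1-p)/2) = 1 by ring,
    ENNReal.ofReal_one]

instance coord_finite (p : ℝ) : MeasureTheory.IsFiniteMeasure (coordMeasure p) := by
  constructor
  unfold coordMeasure
  simp [lt_top_iff_ne_top]

lemma coordProb (p : ℝ) (hp0 : 0 ≤ p) (hp1 : p ≤ 1) :
    MeasureTheory.IsProbabilityMeasure (coordMeasure p) :=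
  ⟨coord_univ p hp0 hp1⟩

lemma cube_mem (d : ℕ) (p : ℝ) (hp0 : 0 ≤ p) (hp1 : p ≤ 1) (x : Fin d → Bool) :
    cubeMeasure d p {c | memSubcube x c} = ENNReal.ofReal ((1+p)/2) ^ d := by
  have hset : {c : Subcube d | memSubcube x c}
      = Set.univ.pi fun i => {o : Option Bool | ∀ b, o = some b → x i = b} := by
    ext c; simp [memSubcube, Set.mem_pi]
  rw [hset, cubeMeasure, MeasureTheory.Measure.pi_pi]
  have : ∀ i : Fin d, (coordMeasure p) {o : Option Bool | ∀ b, o = some b → x i = b}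
      = ENNReal.ofReal ((1+p)/2) := fun i => coord_memSet p hp0 hp1 (x i)
  rw [Finset.prod_congr rfl fun i _ => this i, Finset.prod_const, Finset.card_univ,
    Fintype.card_fin]

lemma cube_singleton (d : ℕ) (p : ℝ) (c : Subcube d) :
    cubeMeasure d p {c} = ∏ i : Fin d, coordMeasure p {c i} := by
  rw [show ({c} : Set (Subcube d)) = Set.univ.pi fun i => {c i} from
    (Set.univ_pi_singleton c).symm, cubeMeasure, MeasureTheory.Measure.pi_pi]

lemma cube_univ (d : ℕ) (p : ℝ) (hp0 : 0 ≤ p) (hp1 : p ≤ 1) :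
    cubeMeasure d p Set.univ = 1 := by
  rw [show (Set.univ : Set (Subcube d)) = Set.univ.pi fun _ => Set.univ from by simp,
    cubeMeasure, MeasureTheory.Measure.pi_pi]
  simp [coord_univ p hp0 hp1]

instance cube_finite (d : ℕ) (p : ℝ) : MeasureTheory.IsFiniteMeasure (cubeMeasure d p) := by
  constructor
  rw [show (Set.univ : Set (Subcube d)) = Set.univ.pi fun _ => Set.univ from by simp,
    cubeMeasure, MeasureTheory.Measure.pi_pi]
  exact ENNReal.prod_lt_top fun i _ => (MeasureTheory.measure_lt_top _ _)

lemma binom_singleton (V : Type*) [Fintype V] (d : ℕ) (p : ℝ) (f : V → Subcube d) :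
    binomialModel V d p {f} = ∏ v : V, cubeMeasure d p {f v} := by
  rw [show ({f} : Set (V → Subcube d)) = Set.univ.pi fun v => {f v} from
    (Set.univ_pi_singleton f).symm, binomialModel, MeasureTheory.Measure.pi_pi]

end AuxProofs
section MGF

open Classical in
/-- number of vertices whose subcube contains `x` -/
noncomputable def Ncount {V : Type*} [Fintype V] {d : ℕ} (x : Fin d → Bool)
    (f : V → Subcube d) : ℕ :=
  (Finset.univ.filter fun v => memSubcube x (f v)).card

open Classical in
lemma mgf_sum (V : Type*) [Fintype V] (d : ℕ) (p : ℝ) (hp0 : 0 ≤ p) (hp1 : p ≤ 1)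
    (x : Fin d → Bool) (lam : ENNReal) :
    ∑ f : V → Subcube d, binomialModel V d p {f} * lam ^ (Ncount x f)
      = ((1 - ENNReal.ofReal ((1+p)/2) ^ d) + ENNReal.ofReal ((1+p)/2) ^ d * lam)
          ^ (Fintype.card V) := by
  set q : ENNReal := ENNReal.ofReal ((1+p)/2) ^ d with hq
  -- rewrite each term as a product over v
  have hterm : ∀ f : V → Subcube d,
      binomialModel V d p {f} * lam ^ (Ncount x f)
        = ∏ v : V, (cubeMeasure d p {f v} * if memSubcube x (f v) then lam else 1) := by
    intro f
    rw [Finset.prod_mul_distrib, ← binom_singleton]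
    congr 1
    rw [← Finset.prod_filter, Finset.prod_const, Ncount]
  rw [Finset.sum_congr rfl fun f _ => hterm f]
  -- swap sum and product
  have hswap :
      ∑ f : V → Subcube d, ∏ v : V,
          (cubeMeasure d p {f v} * if memSubcube x (f v) then lam else 1)
        = ∏ v : V, ∑ c : Subcube d,
            (cubeMeasure d p {c} * if memSubcube x c then lam else 1) := by
    rw [Finset.prod_univ_sum (fun _ => Finset.univ)
      (fun _ c => cubeMeasure d p {c} * if memSubcube x c then lam else 1)]
    rw [Fintype.piFinset_univ]
  rw [hswap]
  -- evaluate the single-coordinate sum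
  have hsingle : ∀ v : V, ∑ c : Subcube d,
      (cubeMeasure d p {c} * if memSubcube x c then lam else 1) = (1 - q) + q * lam := by
    intro v
    have hq' : cubeMeasure d p {c : Subcube d | memSubcube x c} = q := cube_mem d p hp0 hp1 x
    have hmem : ∑ c ∈ Finset.univ.filter (fun c : Subcube d => memSubcube x c),
        cubeMeasure d p {c} = q := by
      rw [← hq', aux_measure_eq_sum (cubeMeasure d p) {c : Subcube d | memSubcube x c}]
      rfl
    have hnot : ∑ c ∈ Finset.univ.filter (fun c : Subcube d => ¬ memSubcube x c),
        cubeMeasure d p {c} = 1 - q := by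
      have h1 : cubeMeasure d p {c : Subcube d | memSubcube x c}ᶜ = 1 - q := by
        rw [MeasureTheory.measure_compl (Set.toFinite _).measurableSet (MeasureTheory.measure_ne_top _ _), hq',
          cube_univ d p hp0 hp1]
      rw [← h1, aux_measure_eq_sum (cubeMeasure d p) {c : Subcube d | memSubcube x c}ᶜ]
      rfl
    simp only [mul_ite, mul_one]
    rw [Finset.sum_ite, ← Finset.sum_mul, hmem, hnot, mul_comm, add_comm]
  rw [Finset.prod_congr rfl fun v _ => hsingle v, Finset.prod_const, Finset.card_univ]

end MGF
section Tail

open Classical in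
lemma tail_bound (V : Type*) [Fintype V] (d : ℕ) (p : ℝ) (hp0 : 0 ≤ p) (hp1 : p ≤ 1)
    (x : Fin d → Bool) (L : ℝ) (hL : 0 < L) (m : ℕ) (S : Set (V → Subcube d))
    (hS : ∀ f ∈ S, (ENNReal.ofReal L) ^ m ≤ (ENNReal.ofReal L) ^ Ncount x f) :
    binomialModel V d p S ≤ ENNReal.ofReal (Real.exp
      ((Fintype.card V) * (((1+p)/2)^d) * (L-1) - m * Real.log L)) := by
  set lam : ENNReal := ENNReal.ofReal L with hlam
  have hlam0 : lam ≠ 0 := by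
    simp [hlam, ENNReal.ofReal_eq_zero]; linarith
  have hlamtop : lam ≠ ⊤ := ENNReal.ofReal_ne_top
  have hpow0 : lam ^ m ≠ 0 := pow_ne_zero m hlam0
  have hpowtop : lam ^ m ≠ ⊤ := ENNReal.pow_ne_top hlamtop
  set n := Fintype.card V with hn
  set q : ENNReal := ENNReal.ofReal ((1+p)/2) ^ d with hq
  -- step 1 : μ S ≤ (lam^m)⁻¹ * MGF
  have step1 : binomialModel V d p S ≤ (lam ^ m)⁻¹ * ((1 - q) + q * lam) ^ n := by
    rw [aux_measure_eq_sum (binomialModel V d p) S, ← mgf_sum V d p hp0 hp1 x lam,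
      Finset.mul_sum]
    calc ∑ f ∈ Finset.univ.filter (· ∈ S), binomialModel V d p {f}
        ≤ ∑ f ∈ Finset.univ.filter (· ∈ S),
            (lam ^ m)⁻¹ * (binomialModel V d p {f} * lam ^ Ncount x f) := by
          apply Finset.sum_le_sum
          intro f hf
          have hfS : f ∈ S := (Finset.mem_filter.mp hf).2
          calc binomialModel V d p {f}
              = (lam ^ m)⁻¹ * (binomialModel V d p {f} * lam ^ m) := by
                rw [mul_comm (binomialModel V d p {f}), ← mul_assoc,
                  ENNReal.inv_mul_cancel hpow0 hpowtop, one_mul]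
            _ ≤ (lam ^ m)⁻¹ * (binomialModel V d p {f} * lam ^ Ncount x f) := by
                exact mul_le_mul_right (mul_le_mul_right (hS f hfS) _) _
      _ ≤ ∑ f : V → Subcube d, (lam ^ m)⁻¹ * (binomialModel V d p {f} * lam ^ Ncount x f) :=
          Finset.sum_le_sum_of_subset (Finset.filter_subset _ _)
  refine step1.trans ?_
  -- step 2 : bound the RHS by the real exponential
  have hQ0 : (0:ℝ) ≤ ((1+p)/2)^d := by positivity
  have hQ1 : ((1+p)/2)^d ≤ 1 := pow_le_one₀ (by linarith) (by linarith)
  have hqQ : q = ENNReal.ofReal (((1+p)/2)^d) := by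
    rw [hq, ← ENNReal.ofReal_pow (by linarith)]
  have hbase : (1 - q) + q * lam = ENNReal.ofReal ((1 - ((1+p)/2)^d) + ((1+p)/2)^d * L) := by
    rw [ENNReal.ofReal_add (by linarith) (by positivity), hqQ,
      ENNReal.ofReal_mul hQ0, ENNReal.ofReal_sub _ hQ0, ENNReal.ofReal_one]
  have hexp1 : (1 - ((1+p)/2)^d) + ((1+p)/2)^d * L ≤ Real.exp (((1+p)/2)^d * (L-1)) := by
    have := Real.add_one_le_exp (((1+p)/2)^d * (L-1))
    nlinarith
  have hmono : ((1 - q) + q * lam) ^ n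
      ≤ ENNReal.ofReal (Real.exp ((n : ℝ) * (((1+p)/2)^d * (L-1)))) := by
    rw [hbase, Real.exp_nat_mul, ← ENNReal.ofReal_pow (by nlinarith)]
    exact ENNReal.ofReal_le_ofReal (by
      apply pow_le_pow_left₀ (by nlinarith) hexp1)
  have hinv : (lam ^ m)⁻¹ = ENNReal.ofReal (Real.exp (-(m * Real.log L))) := by
    rw [hlam, ← ENNReal.ofReal_pow hL.le, ← ENNReal.ofReal_inv_of_pos (pow_pos hL m)]
    congr 1
    rw [Real.exp_neg, Real.exp_nat_mul, Real.exp_log hL]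
  calc (lam ^ m)⁻¹ * ((1 - q) + q * lam) ^ n
      ≤ (lam ^ m)⁻¹ * ENNReal.ofReal (Real.exp ((n : ℝ) * (((1+p)/2)^d * (L-1)))) :=
        mul_le_mul_right hmono _
    _ = ENNReal.ofReal (Real.exp ((n:ℝ) * (((1+p)/2)^d) * (L-1) - m * Real.log L)) := by
        rw [hinv, ← ENNReal.ofReal_mul (Real.exp_pos _).le, ← Real.exp_add]
        congr 2
        ring

end Tail
section Helly

open Classical in
lemma helly_forward {V : Type*} [Fintype V] {d : ℕ} (f : V → Subcube d) (s : ℕ)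
    (h : hasClique f s) : ∃ x : Fin d → Bool, s ≤ Ncount x f := by
  obtain ⟨T, hT, hcl⟩ := h
  refine ⟨fun i => if (∃ v ∈ T, f v i = some true) then true else false, ?_⟩
  have hmem : ∀ v ∈ T, memSubcube (fun i =>
      if (∃ v ∈ T, f v i = some true) then true else false) (f v) := by
    intro v hv i b hb
    cases b with
    | true =>
      show (if ∃ v ∈ T, f v i = some true then true else false) = true
      rw [if_pos (show ∃ v ∈ T, f v i = some true from ⟨v, hv, hb⟩)]
    | false =>
      have hne : ¬ (∃ u ∈ T, f u i = some true) := by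
        rintro ⟨u, hu, hui⟩
        obtain ⟨y, hyu, hyv⟩ := hcl u hu v hv
        have h1 : y i = true := hyu i true hui
        have h2 : y i = false := hyv i false hb
        rw [h1] at h2; exact Bool.noConfusion h2
      simp only [if_neg hne]
  rw [← hT, Ncount]
  apply Finset.card_le_card
  intro v hv
  exact Finset.mem_filter.mpr ⟨Finset.mem_univ v, hmem v hv⟩

lemma helly_reverse {V : Type*} [Fintype V] {d : ℕ} (f : V → Subcube d) (s : ℕ)
    (x : Fin d → Bool) (h : s ≤ Ncount x f) : hasClique f s := by
  classical
  obtain ⟨T, hTsub, hTcard⟩ := Finset.exists_subset_card_eq h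
  refine ⟨T, hTcard, fun u hu v hv => ⟨x, ?_, ?_⟩⟩
  · exact (Finset.mem_filter.mp (hTsub hu)).2
  · exact (Finset.mem_filter.mp (hTsub hv)).2

open Classical in
lemma clique_measure_le (d : ℕ) (p : ℝ) (hp0 : 0 ≤ p) (hp1 : p ≤ 1) (n s : ℕ)
    (L : ℝ) (hL : 1 ≤ L) :
    binomialModel (Fin n) d p {f | hasClique f s}
      ≤ (2:ENNReal)^d * ENNReal.ofReal (Real.exp
          ((n : ℝ) * (((1+p)/2)^d) * (L-1) - s * Real.log L)) := by
  have hsub : {f : Fin n → Subcube d | hasClique f s}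
      ⊆ ⋃ x : Fin d → Bool, {f | s ≤ Ncount x f} := by
    intro f hf
    obtain ⟨x, hx⟩ := helly_forward f s hf
    exact Set.mem_iUnion.mpr ⟨x, hx⟩
  calc binomialModel (Fin n) d p {f | hasClique f s}
      ≤ binomialModel (Fin n) d p (⋃ x : Fin d → Bool, {f | s ≤ Ncount x f}) :=
        measure_mono hsub
    _ ≤ ∑ x : Fin d → Bool, binomialModel (Fin n) d p {f | s ≤ Ncount x f} :=
        measure_iUnion_fintype_le _ _
    _ ≤ ∑ _x : Fin d → Bool, ENNReal.ofReal (Real.exp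
          ((n : ℝ) * (((1+p)/2)^d) * (L-1) - s * Real.log L)) := by
        apply Finset.sum_le_sum
        intro x _
        have := tail_bound (Fin n) d p hp0 hp1 x L (by linarith) s
          {f | s ≤ Ncount x f} (fun f hf =>
            pow_le_pow_right₀ (ENNReal.one_le_ofReal.mpr hL) hf)
        simpa using this
    _ = (2:ENNReal)^d * ENNReal.ofReal (Real.exp
          ((n : ℝ) * (((1+p)/2)^d) * (L-1) - s * Real.log L)) := by
        rw [Finset.sum_const, Finset.card_univ, nsmul_eq_mul]
        congr 1
        simp [Fintype.card_fun]

lemma nonclique_measure_le (d : ℕ) (p : ℝ) (hp0 : 0 ≤ p) (hp1 : p ≤ 1) (n s : ℕ)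
    (L : ℝ) (hL0 : 0 < L) (hL1 : L ≤ 1) :
    binomialModel (Fin n) d p {f | ¬ hasClique f s}
      ≤ ENNReal.ofReal (Real.exp
          ((n : ℝ) * (((1+p)/2)^d) * (L-1) - (s-1 : ℕ) * Real.log L)) := by
  have key : ∀ f ∈ {f : Fin n → Subcube d | ¬ hasClique f s},
      (ENNReal.ofReal L) ^ (s-1) ≤ (ENNReal.ofReal L) ^ Ncount (fun _ => false) f := by
    intro f hf
    have hN : Ncount (fun _ => false) f ≤ s - 1 := by
      by_contra hlt
      push_neg at hlt
      exact hf (helly_reverse f s (fun _ => false) (by omega))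
    exact pow_le_pow_of_le_one zero_le (ENNReal.ofReal_le_one.mpr hL1) hN
  simpa using tail_bound (Fin n) d p hp0 hp1 (fun _ => false) L hL0 (s-1) _ key

end Helly
section Analytic

open Filter

lemma exp_dlog (a : ℝ) (ha : 0 < a) (d : ℕ) : Real.exp (d * Real.log a) = a ^ d := by
  rw [Real.exp_nat_mul, Real.exp_log ha]

lemma squeeze0 (μ : ℕ → ENNReal) (B : ℕ → ℝ)
    (h : ∀ᶠ d in atTop, μ d ≤ ENNReal.ofReal (B d))
    (hB : Tendsto B atTop (nhds 0)) : Tendsto μ atTop (nhds 0) := by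
  have h0 : Tendsto (fun d => ENNReal.ofReal (B d)) atTop (nhds 0) := by
    have := ENNReal.tendsto_ofReal hB
    simpa using this
  exact tendsto_of_tendsto_of_tendsto_of_le_of_le' tendsto_const_nhds h0
    (Eventually.of_forall fun d => zero_le) h

/-- upper bound on `n * ((1+p)/2)^d` from the log condition -/
lemma nQ_upper (p : ℝ) (hp : p ∈ Set.Ioo (0:ℝ) 1) (d n s : ℕ) (r : ℝ) (hs : 1 ≤ s)
    (h : Real.log n ≤ d * Real.log (2/(1+p)) + Real.log s - r) :
    (n:ℝ) * ((1+p)/2)^d ≤ s * Real.exp (-r) := by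
  obtain ⟨hp0, hp1⟩ := hp
  have hA : (0:ℝ) < 2/(1+p) := by positivity
  have hQ : (0:ℝ) < (1+p)/2 := by positivity
  rcases Nat.eq_zero_or_pos n with hn | hn
  · rw [hn]; push_cast
    rw [zero_mul]; positivity
  · have hn1 : (1:ℝ) ≤ n := by exact_mod_cast hn
    have hlogn : (n:ℝ) = Real.exp (Real.log n) := (Real.exp_log (by linarith)).symm
    have hstep : (n:ℝ) ≤ Real.exp (d * Real.log (2/(1+p)) + Real.log s - r) := by
      rw [hlogn]; exact Real.exp_le_exp.mpr h
    have heq : Real.exp (d * Real.log (2/(1+p)) + Real.log s - r)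
        = (2/(1+p))^d * s * Real.exp (-r) := by
      rw [show d * Real.log (2/(1+p)) + Real.log s - r
          = d * Real.log (2/(1+p)) + Real.log s + (-r) by ring,
        Real.exp_add, Real.exp_add, exp_dlog _ hA,
        Real.exp_log (by exact_mod_cast Nat.lt_of_lt_of_le Nat.zero_lt_one hs)]
    have hmul : (n:ℝ) * ((1+p)/2)^d ≤ (2/(1+p))^d * s * Real.exp (-r) * ((1+p)/2)^d := by
      apply mul_le_mul_of_nonneg_right _ (by positivity)
      rw [← heq]; exact hstep
    refine hmul.trans (le_of_eq ?_)
    rw [show (2/(1+p))^d * s * Real.exp (-r) * ((1+p)/2)^d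
        = ((2/(1+p)) * ((1+p)/2))^d * (s * Real.exp (-r)) by rw [mul_pow]; ring]
    rw [show (2/(1+p)) * ((1+p)/2) = 1 by field_simp]
    simp

/-- lower bound on `n * ((1+p)/2)^d` from the log condition -/
lemma nQ_lower (p : ℝ) (hp : p ∈ Set.Ioo (0:ℝ) 1) (d n s : ℕ) (ε : ℝ) (hε : 0 < ε)
    (hs : 1 ≤ s) (hd : 1 ≤ d)
    (h : Real.log n ≥ d * Real.log (2/(1+p)) + Real.log s + ε) :
    (s:ℝ) * Real.exp ε ≤ (n:ℝ) * ((1+p)/2)^d := by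
  obtain ⟨hp0, hp1⟩ := hp
  have hA : (1:ℝ) < 2/(1+p) := by
    rw [lt_div_iff₀ (by linarith)]; linarith
  have hQ : (0:ℝ) < (1+p)/2 := by positivity
  have hlogA : 0 < Real.log (2/(1+p)) := Real.log_pos hA
  have hlogs : 0 ≤ Real.log s := Real.log_natCast_nonneg s
  have hrhs : 0 < d * Real.log (2/(1+p)) + Real.log s + ε := by
    have : (1:ℝ) ≤ d := by exact_mod_cast hd
    nlinarith
  have hn : n ≠ 0 := by
    rintro rfl
    simp only [Nat.cast_zero, Real.log_zero] at h
    linarith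
  have hn1 : (1:ℝ) ≤ n := by exact_mod_cast Nat.one_le_iff_ne_zero.mpr hn
  have hstep : Real.exp (d * Real.log (2/(1+p)) + Real.log s + ε) ≤ n := by
    rw [show (n:ℝ) = Real.exp (Real.log n) from (Real.exp_log (by linarith)).symm]
    exact Real.exp_le_exp.mpr h
  have heq : Real.exp (d * Real.log (2/(1+p)) + Real.log s + ε)
      = (2/(1+p))^d * s * Real.exp ε := by
    rw [Real.exp_add, Real.exp_add, exp_dlog _ (by linarith),
      Real.exp_log (by exact_mod_cast Nat.lt_of_lt_of_le Nat.zero_lt_one hs)]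
  have hmul : (2/(1+p))^d * s * Real.exp ε * ((1+p)/2)^d ≤ (n:ℝ) * ((1+p)/2)^d := by
    apply mul_le_mul_of_nonneg_right _ (by positivity)
    rw [← heq]; exact hstep
  refine le_trans (le_of_eq ?_) hmul
  rw [show (2/(1+p))^d * s * Real.exp ε * ((1+p)/2)^d
      = ((2/(1+p)) * ((1+p)/2))^d * (s * Real.exp ε) by rw [mul_pow]; ring]
  rw [show (2/(1+p)) * ((1+p)/2) = 1 by field_simp]
  simp

lemma s_to_infty (s : ℕ → ℕ)
    (hso : Tendsto (fun d : ℕ => (s d : ℝ) * Real.log d / d) atTop atTop) :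
    Tendsto (fun d : ℕ => (s d : ℝ)) atTop atTop := by
  apply tendsto_atTop_mono' _ _ hso
  filter_upwards [eventually_ge_atTop 1] with d hd
  have hd0 : (0:ℝ) < d := by exact_mod_cast hd
  have hlog : Real.log d ≤ d := (Real.log_le_sub_one_of_pos hd0).trans (by linarith)
  rw [div_le_iff₀ hd0]
  have : (0:ℝ) ≤ s d := Nat.cast_nonneg _
  nlinarith [Real.log_natCast_nonneg d]

end Analytic
section Analytic2
open Filter

lemma neg_dmul_atBot (w : ℕ → ℝ) (hw : Tendsto w atTop atTop) :
    Tendsto (fun d : ℕ => -((d:ℝ) * w d)) atTop atBot :=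
  tendsto_neg_atTop_atBot.comp (tendsto_natCast_atTop_atTop.atTop_mul_atTop₀ hw)

/-- exponent for part (i) tends to -∞ -/
lemma exponent_i (ε : ℝ) (hε : 0 < ε) (s : ℕ → ℕ)
    (hso : Tendsto (fun d : ℕ => (s d : ℝ) * Real.log d / d) atTop atTop) :
    Tendsto (fun d : ℕ => (d:ℝ) * Real.log 2 + s d - ε * ((s d : ℝ) * Real.log d))
      atTop atBot := by
  have hw : Tendsto (fun d : ℕ =>
      (ε/2) * ((s d : ℝ) * Real.log d / d) - Real.log 2) atTop atTop :=
    tendsto_atTop_add_const_right _ _ (hso.const_mul_atTop (by linarith))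
  apply tendsto_atBot_mono' _ _ (neg_dmul_atBot _ hw)
  have hlog := (Real.tendsto_log_atTop.comp
    (tendsto_natCast_atTop_atTop (R := ℝ))).eventually_ge_atTop (max 1 (2/ε))
  filter_upwards [eventually_ge_atTop 1, hlog] with d hd hld
  have hd0 : (0:ℝ) < d := by exact_mod_cast hd
  have hld1 : (1:ℝ) ≤ Real.log d := le_trans (le_max_left _ _) hld
  have hld2 : 2/ε ≤ Real.log d := le_trans (le_max_right _ _) hld
  have hs0 : (0:ℝ) ≤ s d := Nat.cast_nonneg _
  have hkey : (s d : ℝ) ≤ (ε/2) * ((s d : ℝ) * Real.log d) := by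
    have h1 : (2/ε) * (s d : ℝ) ≤ Real.log d * (s d : ℝ) :=
      mul_le_mul_of_nonneg_right hld2 hs0
    have hε' : 0 < ε/2 := by linarith
    rw [← sub_nonneg]
    have : (ε/2) * ((s d:ℝ) * Real.log d) - s d = (ε/2) * (Real.log d * s d - (2/ε) * s d) := by
      field_simp
    rw [this]
    nlinarith
  have hdd : (d:ℝ) * ((ε/2) * ((s d : ℝ) * Real.log d / d) - Real.log 2)
      = (ε/2) * ((s d : ℝ) * Real.log d) - d * Real.log 2 := by
    field_simp
  rw [hdd]
  nlinarith

/-- exponent for part (iii) tends to -∞ -/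
lemma exponent_iii (c : ℝ) (hc : 0 < c) (s : ℕ → ℕ)
    (hso : Tendsto (fun d : ℕ => (s d : ℝ) / d) atTop atTop) :
    Tendsto (fun d : ℕ => (d:ℝ) * Real.log 2 - c * (s d : ℝ)) atTop atBot := by
  have hw : Tendsto (fun d : ℕ => c * ((s d : ℝ) / d) - Real.log 2) atTop atTop :=
    tendsto_atTop_add_const_right _ _ (hso.const_mul_atTop hc)
  apply tendsto_atBot_mono' _ _ (neg_dmul_atBot _ hw)
  filter_upwards [eventually_ge_atTop 1] with d hd
  have hd0 : (0:ℝ) < d := by exact_mod_cast hd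
  have : (d:ℝ) * (c * ((s d : ℝ) / d) - Real.log 2) = c * (s d : ℝ) - d * Real.log 2 := by
    field_simp
  rw [this]
  linarith

end Analytic2
lemma binom_prob (V : Type*) [Fintype V] (d : ℕ) (p : ℝ) (hp0 : 0 ≤ p) (hp1 : p ≤ 1) :
    MeasureTheory.IsProbabilityMeasure (binomialModel V d p) := by
  constructor
  rw [show (Set.univ : Set (V → Subcube d)) = Set.univ.pi fun _ => Set.univ from by simp,
    binomialModel, MeasureTheory.Measure.pi_pi]
  simp [cube_univ d p hp0 hp1]

/-- the common core of parts (i) and (iii) -/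
lemma zero_part_core (p : ℝ) (hp : p ∈ Set.Ioo (0:ℝ) 1) (s n : ℕ → ℕ)
    (r : ℕ → ℝ) (hr : ∀ d, 1 ≤ d → 0 ≤ r d)
    (hcond : ∀ d, 1 ≤ d → Real.log (n d) ≤ d * Real.log (2/(1+p)) + Real.log (s d) - r d)
    (hs : ∀ d, 1 ≤ s d) :
    ∀ d, 1 ≤ d → binomialModel (Fin (n d)) d p {f | hasClique f (s d)}
      ≤ ENNReal.ofReal (Real.exp
          ((d:ℝ) * Real.log 2 + s d * (1 - Real.exp (-(r d))) - s d * r d)) := by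
  intro d hd
  obtain ⟨hp0, hp1⟩ := hp
  set L : ℝ := Real.exp (r d) with hL
  have hL1 : 1 ≤ L := Real.one_le_exp (hr d hd)
  have hcb := clique_measure_le d p hp0.le hp1.le (n d) (s d) L hL1
  refine hcb.trans ?_
  have h2 : (2:ENNReal)^d = ENNReal.ofReal ((2:ℝ)^d) := by
    rw [ENNReal.ofReal_pow (by norm_num)]
    norm_num
  rw [h2, ← ENNReal.ofReal_mul (by positivity)]
  apply ENNReal.ofReal_le_ofReal
  have hnq := nQ_upper p ⟨hp0, hp1⟩ d (n d) (s d) (r d) (hs d) (hcond d hd)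
  have hQ0 : (0:ℝ) ≤ (n d : ℝ) * ((1+p)/2)^d := by positivity
  have hstep1 : (n d : ℝ) * ((1+p)/2)^d * (L - 1)
      ≤ (s d : ℝ) * (1 - Real.exp (-(r d))) := by
    have h2' : (n d : ℝ) * ((1+p)/2)^d * (L - 1)
        ≤ (s d : ℝ) * Real.exp (-(r d)) * (L - 1) :=
      mul_le_mul_of_nonneg_right hnq (by linarith)
    have h3 : (s d : ℝ) * Real.exp (-(r d)) * (L - 1)
        = (s d : ℝ) * (1 - Real.exp (-(r d))) := by
      rw [hL, mul_sub, mul_sub, mul_assoc, ← Real.exp_add]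
      simp
    linarith
  have hlogL : Real.log L = r d := Real.log_exp _
  rw [show (2:ℝ)^d = Real.exp (d * Real.log 2) from (exp_dlog 2 (by norm_num) d).symm,
    ← Real.exp_add]
  apply Real.exp_le_exp.mpr
  rw [hlogL]
  linarith



/-- **Theorem 8 (binomial model, large cliques).** For fixed `p ∈ (0,1)`, `ε > 0`
and `s(d) ≫ d / log d`: the probability that `G_{V(d),d,p}` contains an
`s(d)`-clique tends to `0` if `x(d) ≤ log(2/(1+p)) + log s / d - ε log d / d`, and
tends to `1` if `x(d) ≥ log(2/(1+p)) + log s / d + ε/d`. If moreover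
`s(d)/d → ∞`, it already tends to `0` when `x(d) ≤ log(2/(1+p)) + log s / d - ε/d`. -/
theorem binomial_large_clique_window (p : ℝ) (hp : p ∈ Set.Ioo (0 : ℝ) 1)
    (ε : ℝ) (hε : 0 < ε)
    (s : ℕ → ℕ) (hs : ∀ d, 1 ≤ s d)
    (hso : Tendsto (fun d : ℕ => (s d : ℝ) * Real.log d / d) atTop atTop)
    (n : ℕ → ℕ) (x : ℕ → ℝ) (hx : ∀ d, x d = Real.log (n d) / d) :
    ((∀ d : ℕ, 1 ≤ d →
        x d ≤ Real.log (2 / (1 + p)) + Real.log (s d) / d - ε * Real.log d / d) →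
      Tendsto (fun d => binomialModel (Fin (n d)) d p {f | hasClique f (s d)})
        atTop (nhds 0)) ∧
    ((∀ d : ℕ, 1 ≤ d →
        x d ≥ Real.log (2 / (1 + p)) + Real.log (s d) / d + ε / d) →
      Tendsto (fun d => binomialModel (Fin (n d)) d p {f | hasClique f (s d)})
        atTop (nhds 1)) ∧
    (Tendsto (fun d : ℕ => (s d : ℝ) / d) atTop atTop →
      (∀ d : ℕ, 1 ≤ d →
        x d ≤ Real.log (2 / (1 + p)) + Real.log (s d) / d - ε / d) →
      Tendsto (fun d => binomialModel (Fin (n d)) d p {f | hasClique f (s d)})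
        atTop (nhds 0)) := by
  obtain ⟨hp0, hp1⟩ := hp
  have hconv : ∀ (r : ℕ → ℝ), (∀ d : ℕ, 1 ≤ d →
      x d ≤ Real.log (2 / (1 + p)) + Real.log (s d) / d - r d / d) →
      ∀ d : ℕ, 1 ≤ d →
        Real.log (n d) ≤ d * Real.log (2/(1+p)) + Real.log (s d) - r d := by
    intro r hcond d hd
    have hd0 : (0:ℝ) < d := by exact_mod_cast hd
    have h1 := hcond d hd
    rw [hx d, div_le_iff₀ hd0] at h1
    have h2 : (Real.log (2/(1+p)) + Real.log (s d)/d - r d/d) * d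
        = d * Real.log (2/(1+p)) + Real.log (s d) - r d := by
      field_simp
    linarith [h1.trans_eq h2]
  refine ⟨?_, ?_, ?_⟩
  · -- part (i)
    intro hcond
    have hlog := hconv (fun d => ε * Real.log d) hcond
    have hr : ∀ d : ℕ, 1 ≤ d → 0 ≤ ε * Real.log d := fun d hd =>
      mul_nonneg hε.le (Real.log_natCast_nonneg d)
    have hcore := zero_part_core p ⟨hp0, hp1⟩ s n _ hr hlog hs
    apply squeeze0 _
      (fun d : ℕ => Real.exp ((d:ℝ) * Real.log 2 + s d - ε * ((s d : ℝ) * Real.log d)))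
    · filter_upwards [eventually_ge_atTop 1] with d hd
      refine (hcore d hd).trans (ENNReal.ofReal_le_ofReal (Real.exp_le_exp.mpr ?_))
      have he : 0 < Real.exp (-(ε * Real.log d)) := Real.exp_pos _
      have hs0 : (0:ℝ) ≤ s d := Nat.cast_nonneg _
      nlinarith
    · exact Real.tendsto_exp_atBot.comp (exponent_i ε hε s hso)
  · -- part (ii)
    intro hcond
    have hlog : ∀ d : ℕ, 1 ≤ d →
        Real.log (n d) ≥ d * Real.log (2/(1+p)) + Real.log (s d) + ε := by
      intro d hd
      have hd0 : (0:ℝ) < d := by exact_mod_cast hd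
      have h1 := hcond d hd
      rw [hx d, ge_iff_le, le_div_iff₀ hd0] at h1
      have h2 : (Real.log (2/(1+p)) + Real.log (s d)/d + ε/d) * d
          = d * Real.log (2/(1+p)) + Real.log (s d) + ε := by
        field_simp
      linarith [h2 ▸ h1]
    set c : ℝ := Real.exp ε - 1 - ε with hcdef
    have hc : 0 < c := by
      have := Real.add_one_lt_exp hε.ne'
      simp only [hcdef]
      linarith
    have hncl : Tendsto
        (fun d => binomialModel (Fin (n d)) d p {f | ¬ hasClique f (s d)})
        atTop (nhds 0) := by
      apply squeeze0 _ (fun d : ℕ => Real.exp (-(c * s d)))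
      · filter_upwards [eventually_ge_atTop 1] with d hd
        have hLpos : (0:ℝ) < Real.exp (-ε) := Real.exp_pos _
        have hL1 : Real.exp (-ε) ≤ 1 := by
          rw [← Real.exp_zero]
          exact Real.exp_le_exp.mpr (by linarith)
        have hb := nonclique_measure_le d p hp0.le hp1.le (n d) (s d)
          (Real.exp (-ε)) hLpos hL1
        refine hb.trans (ENNReal.ofReal_le_ofReal (Real.exp_le_exp.mpr ?_))
        have hnq := nQ_lower p ⟨hp0, hp1⟩ d (n d) (s d) ε hε (hs d) hd (hlog d hd)
        rw [Real.log_exp]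
        have hfac : Real.exp (-ε) - 1 ≤ 0 := by linarith
        have h1 : (n d : ℝ) * ((1+p)/2)^d * (Real.exp (-ε) - 1)
            ≤ (s d : ℝ) * Real.exp ε * (Real.exp (-ε) - 1) :=
          mul_le_mul_of_nonpos_right hnq hfac
        have h2 : (s d : ℝ) * Real.exp ε * (Real.exp (-ε) - 1)
            = (s d : ℝ) * (1 - Real.exp ε) := by
          rw [mul_assoc, mul_sub, ← Real.exp_add]
          simp
        have hcast : ((s d - 1 : ℕ) : ℝ) ≤ (s d : ℝ) := by
          exact_mod_cast Nat.sub_le (s d) 1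
        have hs0 : (0:ℝ) ≤ ((s d - 1 : ℕ) : ℝ) := Nat.cast_nonneg _
        nlinarith
      · apply Real.tendsto_exp_atBot.comp
        exact tendsto_neg_atTop_atBot.comp ((s_to_infty s hso).const_mul_atTop hc)
    have heq : ∀ d : ℕ, binomialModel (Fin (n d)) d p {f | hasClique f (s d)}
        = 1 - binomialModel (Fin (n d)) d p {f | ¬ hasClique f (s d)} := by
      intro d
      haveI := binom_prob (Fin (n d)) d p hp0.le hp1.le
      have hcompl : {f : Fin (n d) → Subcube d | ¬ hasClique f (s d)}ᶜ
          = {f | hasClique f (s d)} := by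
        ext f; simp
      rw [← hcompl, MeasureTheory.prob_compl_eq_one_sub (Set.toFinite _).measurableSet]
    have hsub := ENNReal.Tendsto.sub
      (tendsto_const_nhds : Tendsto (fun _ : ℕ => (1:ENNReal)) atTop (nhds 1))
      hncl (Or.inl ENNReal.one_ne_top)
    simp only [tsub_zero] at hsub
    exact hsub.congr fun d => (heq d).symm
  · -- part (iii)
    intro hso3 hcond
    have hlog := hconv (fun _ => ε) hcond
    have hr : ∀ d : ℕ, 1 ≤ d → 0 ≤ ε := fun _ _ => hε.le
    have hcore := zero_part_core p ⟨hp0, hp1⟩ s n _ hr hlog hs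
    set c : ℝ := ε + Real.exp (-ε) - 1 with hcdef
    have hc : 0 < c := by
      have := Real.add_one_lt_exp (show -ε ≠ 0 from neg_ne_zero.mpr hε.ne')
      simp only [hcdef]
      linarith
    apply squeeze0 _ (fun d : ℕ => Real.exp ((d:ℝ) * Real.log 2 - c * (s d : ℝ)))
    · filter_upwards [eventually_ge_atTop 1] with d hd
      refine (hcore d hd).trans (ENNReal.ofReal_le_ofReal (Real.exp_le_exp.mpr ?_))
      have : (s d : ℝ) * (1 - Real.exp (-ε)) - (s d : ℝ) * ε = -(c * (s d : ℝ)) := by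
        simp only [hcdef]
        ring
      linarith
    · exact Real.tendsto_exp_atBot.comp (exponent_iii c hc s hso3)
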